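/- arXiv:2301.12927 — 2 statements merged into one kernel-verified Lean document; each statement's English description precedes it below -/
import Mathlib

section
/- For real parameters a, b, c > 0 with c ≠ b and a < min(1, b+1, c+1), the Clausen hypergeometric series ₃F₂(a,b,c; b+1,c+1; 1) = Σ_{n=0}^∞ (a)_n (b)_n (c)_n / ((b+1)_n (c+1)_n n!) converges and equals (bc/(c−b))·Γ(1−a)·[Γ(b)/Γ(1−a+b) − Γ(c)/Γ(1−a+c)]. -/
open Real

noncomputable def poch (x : ℝ) (n : ℕ) : ℝ := (ascPochhammer ℝ n).eval x

/-!
Since `(b)ₙ / (b + 1)ₙ = b / (b + n)`, the summand is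
`b c / (c - b) · (a)ₙ / n! · (1 / (b + n) - 1 / (c + n))`, so it suffices to evaluate
`∑ (a)ₙ / (n! (u + n))` for `u > 0`. Writing `1 / (u + n) = ∫₀¹ x ^ (u + n - 1) dx` and summing the
binomial series `∑ (a)ₙ / n! xⁿ = (1 - x) ^ (-a)` under the integral (legitimate because all terms
are nonnegative when `a > 0`) turns this sum into the Beta integral `B(u, 1 - a)`.
-/

open Set MeasureTheory

lemma poch_pos {x : ℝ} (hx : 0 < x) (n : ℕ) : 0 < poch x n :=
  ascPochhammer_pos n x hx

lemma poch_mul_add_natCast (x : ℝ) (n : ℕ) : poch x n * (x + n) = x * poch (x + 1) n := by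
  have h := congrArg (Polynomial.eval x) (ascPochhammer_succ_left ℝ n)
  rw [ascPochhammer_succ_right] at h
  simpa [poch] using h

lemma poch_div_poch_add_one {x : ℝ} (hx : 0 < x) (n : ℕ) :
    poch x n / poch (x + 1) n = x / (x + n) := by
  rw [div_eq_div_iff (poch_pos (by linarith) n).ne' (by positivity), poch_mul_add_natCast]

lemma choose_add_natCast_sub_one (a : ℝ) (n : ℕ) :
    Ring.choose (a + n - 1) n = poch a n / n.factorial := by
  rw [eq_div_iff (by positivity), mul_comm, ← Ring.multichoose_eq, ← nsmul_eq_mul,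
    Ring.factorial_nsmul_multichoose_eq_ascPochhammer, Polynomial.ascPochhammer_smeval_cast,
    Polynomial.ascPochhammer_smeval_eq_eval, poch]

lemma hasSum_poch_div_factorial_mul_pow (a : ℝ) {x : ℝ} (hx : |x| < 1) :
    HasSum (fun n : ℕ => poch a n / n.factorial * x ^ n) (1 / (1 - x) ^ a) := by
  simpa [FormalMultilinearSeries.ofScalars, choose_add_natCast_sub_one] using
    (one_div_one_sub_rpow_hasFPowerSeriesOnBall_zero a).hasSum
      (y := x) (by simpa [enorm_eq_nnnorm, ← NNReal.coe_lt_one] using hx)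

lemma lintegral_rpow_mul_one_sub_rpow {u v : ℝ} (hu : 0 < u) (hv : 0 < v) :
    ∫⁻ x in Ioo (0 : ℝ) 1, ENNReal.ofReal (x ^ (u - 1) * (1 - x) ^ (v - 1)) =
      ENNReal.ofReal (Gamma u * Gamma v / Gamma (u + v)) := by
  have hB := ProbabilityTheory.beta_pos hu hv
  have h := ProbabilityTheory.lintegral_betaPDF_eq_one hu hv
  simp_rw [ProbabilityTheory.lintegral_betaPDF, mul_assoc,
    ENNReal.ofReal_mul (one_div_pos.2 hB).le, lintegral_const_mul' _ _ ENNReal.ofReal_ne_top,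
    one_div, ENNReal.ofReal_inv_of_pos hB] at h
  rw [← ProbabilityTheory.beta]
  exact (ENNReal.eq_inv_of_mul_eq_one_left ((mul_comm _ _).trans h)).trans (inv_inv _)

lemma lintegral_rpow_sub_one_Ioo {s : ℝ} (hs : 0 < s) :
    ∫⁻ x in Ioo (0 : ℝ) 1, ENNReal.ofReal (x ^ (s - 1)) = ENNReal.ofReal (1 / s) := by
  simpa [Gamma_add_one hs.ne', (Gamma_pos_of_pos hs).ne', div_mul_cancel_right₀] using
    lintegral_rpow_mul_one_sub_rpow hs one_pos

lemma hasSum_of_tsum_ofReal_eq {ι : Type*} {g : ι → ℝ} {s : ℝ} (hg : ∀ i, 0 ≤ g i) (hs : 0 ≤ s)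
    (h : ∑' i, ENNReal.ofReal (g i) = ENNReal.ofReal s) : HasSum g s := by
  have hsum := ENNReal.hasSum_toReal (h ▸ ENNReal.ofReal_ne_top)
  rwa [← ENNReal.tsum_toReal_eq fun _ => ENNReal.ofReal_ne_top, h, ENNReal.toReal_ofReal hs,
    funext fun i => ENNReal.toReal_ofReal (hg i)] at hsum

theorem hasSum_poch_div_factorial_div_add {a u : ℝ} (ha : 0 < a) (ha1 : a < 1) (hu : 0 < u) :
    HasSum (fun n : ℕ => poch a n / n.factorial / (u + n))
      (Gamma u * Gamma (1 - a) / Gamma (u + (1 - a))) := by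
  have hcoeff (n : ℕ) : 0 ≤ poch a n / n.factorial := by have := poch_pos ha n; positivity
  have hterm (n : ℕ) : ENNReal.ofReal (poch a n / n.factorial / (u + n)) =
      ∫⁻ x in Ioo (0 : ℝ) 1, ENNReal.ofReal (poch a n / n.factorial * x ^ (u + n - 1)) := by
    simp_rw [ENNReal.ofReal_mul (hcoeff n)]
    rw [lintegral_const_mul' _ _ ENNReal.ofReal_ne_top, lintegral_rpow_sub_one_Ioo (by positivity),
      ← ENNReal.ofReal_mul (hcoeff n), mul_one_div]
  have hseries : ∀ x ∈ Ioo (0 : ℝ) 1,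
      ∑' n : ℕ, ENNReal.ofReal (poch a n / n.factorial * x ^ (u + n - 1)) =
        ENNReal.ofReal (x ^ (u - 1) * (1 - x) ^ (1 - a - 1)) := by
    rintro x ⟨hx0, hx1⟩
    have hbin := (hasSum_poch_div_factorial_mul_pow a (abs_lt.2 ⟨by linarith, hx1⟩)).mul_left
      (x ^ (u - 1))
    have hpow (n : ℕ) : x ^ (u - 1) * (poch a n / n.factorial * x ^ n) =
        poch a n / n.factorial * x ^ (u + n - 1) := by
      rw [show u + n - 1 = u - 1 + n by ring, rpow_add hx0, rpow_natCast]; ring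
    simp_rw [hpow] at hbin
    rw [← ENNReal.ofReal_tsum_of_nonneg (fun n => mul_nonneg (hcoeff n) (rpow_nonneg hx0.le _))
      hbin.summable, hbin.tsum_eq, show 1 - a - 1 = -a by ring, rpow_neg (by linarith), one_div]
  refine hasSum_of_tsum_ofReal_eq (fun n => by have := hcoeff n; positivity)
    (ProbabilityTheory.beta_pos hu (sub_pos.2 ha1)).le ?_
  calc ∑' n : ℕ, ENNReal.ofReal (poch a n / n.factorial / (u + n))
      = ∑' n : ℕ, ∫⁻ x in Ioo (0 : ℝ) 1,
          ENNReal.ofReal (poch a n / n.factorial * x ^ (u + n - 1)) := tsum_congr hterm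
    _ = ∫⁻ x in Ioo (0 : ℝ) 1, ∑' n : ℕ,
          ENNReal.ofReal (poch a n / n.factorial * x ^ (u + n - 1)) :=
        (lintegral_tsum fun n => by fun_prop).symm
    _ = ∫⁻ x in Ioo (0 : ℝ) 1, ENNReal.ofReal (x ^ (u - 1) * (1 - x) ^ (1 - a - 1)) :=
        setLIntegral_congr_fun measurableSet_Ioo hseries
    _ = _ := lintegral_rpow_mul_one_sub_rpow hu (by linarith)

lemma clausen_term_eq_sub {b c : ℝ} (hb : 0 < b) (hc : 0 < c) (hbc : c ≠ b) (a : ℝ) (n : ℕ) :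
    poch a n * poch b n * poch c n / (poch (b + 1) n * poch (c + 1) n * (n.factorial : ℝ)) =
      b * c / (c - b) * (poch a n / n.factorial / (b + n) - poch a n / n.factorial / (c + n)) := by
  have hbn : b + n ≠ 0 := by positivity
  have hcn : c + n ≠ 0 := by positivity
  have hcb : c - b ≠ 0 := sub_ne_zero.2 hbc
  calc poch a n * poch b n * poch c n / (poch (b + 1) n * poch (c + 1) n * n.factorial)
      = poch a n / n.factorial * (poch b n / poch (b + 1) n) * (poch c n / poch (c + 1) n) := by
        ring
    _ = poch a n / n.factorial * (b / (b + n)) * (c / (c + n)) := by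
        rw [poch_div_poch_add_one hb, poch_div_poch_add_one hc]
    _ = _ := by field_simp; ring

theorem clausen_3F2_unit_general (a b c : ℝ) (ha : 0 < a) (hb : 0 < b) (hc : 0 < c)
    (hbc : c ≠ b) (ha1 : a < 1) :
    HasSum (fun n : ℕ =>
        poch a n * poch b n * poch c n /
          (poch (b + 1) n * poch (c + 1) n * (n.factorial : ℝ)))
      (b * c / (c - b) * Real.Gamma (1 - a) *
        (Real.Gamma b / Real.Gamma (1 - a + b) - Real.Gamma c / Real.Gamma (1 - a + c))) := by
  have H := ((hasSum_poch_div_factorial_div_add ha ha1 hb).sub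
    (hasSum_poch_div_factorial_div_add ha ha1 hc)).mul_left (b * c / (c - b))
  simp_rw [← clausen_term_eq_sub hb hc hbc] at H
  refine (congrArg (fun s => HasSum _ s) ?_).mp H
  rw [add_comm b, add_comm c]
  ring

theorem clausen_3F2_unit (a b c : ℝ) (ha : 0 < a) (hb : 0 < b) (hc : 0 < c)
    (hbc : c ≠ b) (ha1 : a < 1) (hab : a < b + 1) (hac : a < c + 1) :
    HasSum (fun n : ℕ =>
        poch a n * poch b n * poch c n /
          (poch (b + 1) n * poch (c + 1) n * (n.factorial : ℝ)))
      (b * c / (c - b) * Real.Gamma (1 - a) *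
        (Real.Gamma b / Real.Gamma (1 - a + b) - Real.Gamma c / Real.Gamma (1 - a + c))) :=
  clausen_3F2_unit_general a b c ha hb hc hbc ha1
end

section
/- Let b, c > 0 with b ≠ c and let 0 < a < 1 with a < min(b+1, c+1). Then the function G(x) = Γ(x)/Γ(1−a+x) on (0,∞) satisfies: the ₃F₂ evaluation ₃F₂(a,b,c;b+1,c+1;1) = (bc/(c−b))·Γ(1−a)·(G(b) − G(c)) is positive. -/
open Real MeasureTheory Set

/-!
Writing `G(x) = Γ(x) / Γ(x + s)` with `s = 1 - a > 0`, the Beta integral gives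
`Γ(s) G(x) = ∫₀¹ tˣ⁻¹ (1 - t)ˢ⁻¹ dt`, and the integrand decreases strictly in `x` because `t < 1`.
So `G` is strictly decreasing on `(0, ∞)`, which makes `(G b - G c) / (c - b)` positive.
-/

noncomputable def realBetaIntegral (x s : ℝ) : ℝ :=
  ∫ t in (0 : ℝ)..1, t ^ (x - 1) * (1 - t) ^ (s - 1)

lemma ofReal_betaIntegrand {x s t : ℝ} (ht : t ∈ Icc (0 : ℝ) 1) :
    ((t ^ (x - 1) * (1 - t) ^ (s - 1) : ℝ) : ℂ) =
      (t : ℂ) ^ ((x : ℂ) - 1) * (1 - (t : ℂ)) ^ ((s : ℂ) - 1) := by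
  push_cast [Complex.ofReal_cpow ht.1, Complex.ofReal_cpow (sub_nonneg.2 ht.2)]
  rfl

lemma Complex.betaIntegral_ofReal (x s : ℝ) :
    Complex.betaIntegral x s = realBetaIntegral x s := by
  rw [Complex.betaIntegral, realBetaIntegral, ← intervalIntegral.integral_ofReal]
  refine intervalIntegral.integral_congr fun t ht => ?_
  rw [uIcc_of_le zero_le_one] at ht
  exact (ofReal_betaIntegrand ht).symm

lemma intervalIntegrable_betaIntegrand {x s : ℝ} (hx : 0 < x) (hs : 0 < s) :
    IntervalIntegrable (fun t : ℝ => t ^ (x - 1) * (1 - t) ^ (s - 1)) volume 0 1 := by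
  refine (Complex.betaIntegral_convergent (u := x) (v := s) (by simpa) (by simpa)).norm.congr
    fun t ht => ?_
  rw [uIoc_of_le zero_le_one] at ht
  have ht' : t ∈ Icc (0 : ℝ) 1 := Ioc_subset_Icc_self ht
  simp only [← ofReal_betaIntegrand ht', Complex.norm_real, Real.norm_eq_abs]
  exact abs_of_nonneg (mul_nonneg (rpow_nonneg ht'.1 _) (rpow_nonneg (sub_nonneg.2 ht'.2) _))

lemma Gamma_mul_Gamma_eq_mul_realBetaIntegral {x s : ℝ} (hx : 0 < x) (hs : 0 < s) :
    Gamma x * Gamma s = Gamma (x + s) * realBetaIntegral x s := by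
  have h := Complex.Gamma_mul_Gamma_eq_betaIntegral (s := x) (t := s) (by simpa) (by simpa)
  rw [Complex.betaIntegral_ofReal, ← Complex.ofReal_add] at h
  simp only [Complex.Gamma_ofReal] at h
  exact_mod_cast h

lemma realBetaIntegral_strictAntiOn {s : ℝ} (hs : 0 < s) :
    StrictAntiOn (realBetaIntegral · s) (Ioi 0) := by
  intro x hx y hy hxy
  have hpos : 0 < ∫ t in (0 : ℝ)..1,
      t ^ (x - 1) * (1 - t) ^ (s - 1) - t ^ (y - 1) * (1 - t) ^ (s - 1) := by
    refine intervalIntegral.intervalIntegral_pos_of_pos_on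
      ((intervalIntegrable_betaIntegrand hx hs).sub (intervalIntegrable_betaIntegrand hy hs))
      (fun t ht => ?_) one_pos
    have h_pow : t ^ (y - 1) < t ^ (x - 1) := rpow_lt_rpow_of_exponent_gt ht.1 ht.2 (by linarith)
    have h_pos : 0 < (1 - t) ^ (s - 1) := rpow_pos_of_pos (by linarith [ht.2]) _
    nlinarith
  rw [intervalIntegral.integral_sub (intervalIntegrable_betaIntegrand hx hs)
    (intervalIntegrable_betaIntegrand hy hs)] at hpos
  exact sub_pos.1 hpos

lemma Gamma_div_Gamma_add_strictAntiOn {s : ℝ} (hs : 0 < s) :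
    StrictAntiOn (fun x => Gamma x / Gamma (x + s)) (Ioi 0) := by
  intro x hx y hy hxy
  have h_eq {z : ℝ} (hz : z ∈ Ioi (0 : ℝ)) :
      Gamma z / Gamma (z + s) = realBetaIntegral z s / Gamma s := by
    rw [div_eq_div_iff (Gamma_pos_of_pos (add_pos hz hs)).ne' (Gamma_pos_of_pos hs).ne',
      Gamma_mul_Gamma_eq_mul_realBetaIntegral hz hs, mul_comm]
  simp only [h_eq hx, h_eq hy]
  exact div_lt_div_of_pos_right (realBetaIntegral_strictAntiOn hs hx hy hxy) (Gamma_pos_of_pos hs)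

lemma StrictAntiOn.div_sub_pos {f : ℝ → ℝ} {S : Set ℝ} (hf : StrictAntiOn f S) {b c : ℝ}
    (hb : b ∈ S) (hc : c ∈ S) (hbc : b ≠ c) : 0 < (f b - f c) / (c - b) := by
  rcases hbc.lt_or_gt with h | h
  · exact div_pos (sub_pos.2 (hf hb hc h)) (sub_pos.2 h)
  · exact div_pos_of_neg_of_neg (sub_neg.2 (hf hc hb h)) (sub_neg.2 h)

theorem clausen_value_pos_general (a b c : ℝ) (hb : 0 < b) (hc : 0 < c) (hbc : b ≠ c)
    (ha1 : a < 1) :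
    0 < b * c / (c - b) * Real.Gamma (1 - a) *
        (Real.Gamma b / Real.Gamma (1 - a + b) - Real.Gamma c / Real.Gamma (1 - a + c)) := by
  have hs : 0 < 1 - a := sub_pos.2 ha1
  have h_slope := (Gamma_div_Gamma_add_strictAntiOn hs).div_sub_pos hb hc hbc
  simp only [add_comm (1 - a)]
  calc 0 < b * c * Gamma (1 - a) * ((Gamma b / Gamma (b + (1 - a)) -
        Gamma c / Gamma (c + (1 - a))) / (c - b)) :=
          mul_pos (mul_pos (mul_pos hb hc) (Gamma_pos_of_pos hs)) h_slope
    _ = _ := by ring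

theorem clausen_value_pos (a b c : ℝ) (hb : 0 < b) (hc : 0 < c) (hbc : b ≠ c)
    (ha0 : 0 < a) (ha1 : a < 1) (hab : a < b + 1) (hac : a < c + 1) :
    0 < b * c / (c - b) * Real.Gamma (1 - a) *
        (Real.Gamma b / Real.Gamma (1 - a + b) - Real.Gamma c / Real.Gamma (1 - a + c)) :=
  clausen_value_pos_general a b c hb hc hbc ha1
end
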